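/- Let φ : ℝ → ℝ be four times continuously differentiable with sup_x φ''(x) − inf_x φ''(x) ≤ B and |φ''''(x)| ≤ K4 for all x, and let β > 0, μ0, δr ∈ ℝ satisfy β + φ''(μ0) − B > 0. Assume the regularity needed for the hybrid h to be a well-defined probability measure with finite variance v_h > 0 and for the boundary terms in integration by parts to vanish. Then the site precision β_site := v_h⁻¹ − β satisfies the upper bound β_site ≤ φ''(μ_h) + (K4/2)·(β + φ''(μ0) − B)⁻¹. -/

import Mathlib

/-!
Write the hybrid density as `ρ = exp (-U)` with score `s = U' = φ' + β x - (β μ0 - δr)`.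
Integrating by parts against `ρ` gives `E[(x - μ_h) s] = 1` and `E[s²] = E[U''] = E[φ''] + β`,
so Cauchy–Schwarz (the Cramér–Rao bound) yields `v_h⁻¹ ≤ E[s²]`, i.e. `β_site ≤ E[φ'']`.
Since `U'' ≥ c := β + φ''(μ0) - B > 0`, the score is `c`-strongly increasing; this makes the
boundary term `(x - μ_h) ρ` of the first integration by parts vanish, and integrating
`c (x - μ_h)² ≤ (x - μ_h) (s x - s μ_h)` gives `v_h ≤ c⁻¹`. Finally the second-order Taylor bound
`φ'' x ≤ φ'' μ_h + φ''' μ_h (x - μ_h) + (K4/2) (x - μ_h)²` integrates to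
`E[φ''] ≤ φ''(μ_h) + (K4/2) v_h ≤ φ''(μ_h) + (K4/2) c⁻¹`.
-/

open MeasureTheory Real Filter

noncomputable section

/-- Unnormalized density of the hybrid distribution:
`l(x) · exp(−(β/2)x² + (β μ0 − δr)x)` with `l = exp (−φ)`. -/
def hybridDens (φ : ℝ → ℝ) (β μ0 δr : ℝ) (x : ℝ) : ℝ :=
  Real.exp (-(φ x) - β / 2 * x ^ 2 + (β * μ0 - δr) * x)

/-- The hybrid distribution: the normalized measure with density
proportional to `hybridDens`. -/
def hybrid (φ : ℝ → ℝ) (β μ0 δr : ℝ) : Measure ℝ :=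
  ((volume.withDensity fun x => ENNReal.ofReal (hybridDens φ β μ0 δr x)) Set.univ)⁻¹ •
    (volume.withDensity fun x => ENNReal.ofReal (hybridDens φ β μ0 δr x))

/-- Mean of the hybrid distribution. -/
def hybridMean (φ : ℝ → ℝ) (β μ0 δr : ℝ) : ℝ :=
  ∫ x, x ∂(hybrid φ β μ0 δr)

/-- Variance of the hybrid distribution. -/
def hybridVar (φ : ℝ → ℝ) (β μ0 δr : ℝ) : ℝ :=
  ∫ x, (x - hybridMean φ β μ0 δr) ^ 2 ∂(hybrid φ β μ0 δr)

open Set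

section NormalizedDensity

variable {α : Type*} [MeasurableSpace α] {μ : Measure α} {ρ : α → ℝ}

theorem integral_inv_smul_withDensity_ofReal (hρm : Measurable ρ) (hρ : ∀ x, 0 ≤ ρ x)
    (f : α → ℝ) :
    ∫ x, f x ∂((μ.withDensity fun x => ENNReal.ofReal (ρ x)) univ)⁻¹ •
        μ.withDensity (fun x => ENNReal.ofReal (ρ x)) =
      (∫ x, ρ x ∂μ)⁻¹ * ∫ x, ρ x * f x ∂μ := by
  rw [integral_smul_measure, ENNReal.toReal_inv, withDensity_apply _ MeasurableSet.univ,
    Measure.restrict_univ, ← integral_eq_lintegral_of_nonneg_ae (.of_forall hρ)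
      hρm.aestronglyMeasurable,
    integral_withDensity_eq_integral_toReal_smul hρm.ennreal_ofReal
      (.of_forall fun _ => ENNReal.ofReal_lt_top)]
  simp [ENNReal.toReal_ofReal (hρ _)]

theorem MeasureTheory.Integrable.mul_of_inv_smul_withDensity_ofReal (hρm : Measurable ρ)
    (hρ : ∀ x, 0 ≤ ρ x)
    [hP : IsProbabilityMeasure (((μ.withDensity fun x => ENNReal.ofReal (ρ x)) univ)⁻¹ •
        μ.withDensity (fun x => ENNReal.ofReal (ρ x)))] {f : α → ℝ}
    (hf : Integrable f (((μ.withDensity fun x => ENNReal.ofReal (ρ x)) univ)⁻¹ •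
        μ.withDensity (fun x => ENNReal.ofReal (ρ x)))) :
    Integrable (fun x => ρ x * f x) μ := by
  have hnorm := hP.measure_univ
  rw [Measure.smul_apply, smul_eq_mul] at hnorm
  have h0 : (μ.withDensity fun x => ENNReal.ofReal (ρ x)) univ ≠ 0 := by
    intro h; simp [h] at hnorm
  have htop : (μ.withDensity fun x => ENNReal.ofReal (ρ x)) univ ≠ ⊤ := by
    intro h; simp [h] at hnorm
  rw [integrable_smul_measure (ENNReal.inv_ne_zero.2 htop) (ENNReal.inv_ne_top.2 h0),
    integrable_withDensity_iff_integrable_smul' hρm.ennreal_ofReal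
      (.of_forall fun _ => ENNReal.ofReal_lt_top)] at hf
  simpa [ENNReal.toReal_ofReal (hρ _)] using hf

end NormalizedDensity

theorem MeasureTheory.Integrable.mul_of_integrable_sq {α : Type*} [MeasurableSpace α]
    {P : Measure α} {f g : α → ℝ} (hf : AEStronglyMeasurable f P) (hg : AEStronglyMeasurable g P)
    (hf2 : Integrable (fun x => f x ^ 2) P) (hg2 : Integrable (fun x => g x ^ 2) P) :
    Integrable (fun x => f x * g x) P :=
  ((memLp_two_iff_integrable_sq hf).2 hf2).integrable_mul
    ((memLp_two_iff_integrable_sq hg).2 hg2)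

theorem inv_integral_sq_le_integral_sq {α : Type*} [MeasurableSpace α] {P : Measure α}
    {f g : α → ℝ} (hf2 : Integrable (fun x => f x ^ 2) P) (hg2 : Integrable (fun x => g x ^ 2) P)
    (hfg : Integrable (fun x => f x * g x) P) (hfg1 : ∫ x, f x * g x ∂P = 1)
    (hpos : 0 < ∫ x, f x ^ 2 ∂P) :
    (∫ x, f x ^ 2 ∂P)⁻¹ ≤ ∫ x, g x ^ 2 ∂P := by
  set v := ∫ x, f x ^ 2 ∂P
  have hpt : ∀ x, 2 * (f x * g x) ≤ v⁻¹ * f x ^ 2 + v * g x ^ 2 := fun x => by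
    have hsq : v⁻¹ * f x ^ 2 + v * g x ^ 2 - 2 * (f x * g x) =
        v⁻¹ * (f x - v * g x) ^ 2 := by
      field_simp
      ring
    linarith [mul_nonneg (inv_nonneg.2 hpos.le) (sq_nonneg (f x - v * g x))]
  have hsum : Integrable (fun x => v⁻¹ * f x ^ 2 + v * g x ^ 2) P :=
    (hf2.const_mul _).add (hg2.const_mul _)
  have h := integral_mono (hfg.const_mul 2) hsum hpt
  rw [integral_const_mul, integral_add (hf2.const_mul _) (hg2.const_mul _), integral_const_mul,
    integral_const_mul, hfg1, inv_mul_cancel₀ hpos.ne'] at h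
  rw [inv_le_iff_one_le_mul₀ hpos]
  linarith

def IsStronglyIncreasing (c : ℝ) (s : ℝ → ℝ) : Prop :=
  ∀ ⦃x y⦄, x ≤ y → c * (y - x) ≤ s y - s x

namespace IsStronglyIncreasing

variable {s : ℝ → ℝ} {c : ℝ}

theorem of_le_deriv (hs : Differentiable ℝ s) (hc : ∀ x, c ≤ deriv s x) :
    IsStronglyIncreasing c s :=
  mul_sub_le_image_sub_of_le_deriv hs hc

theorem mul_abs_sub_le (hs : IsStronglyIncreasing c s) (x y : ℝ) :
    c * |x - y| ≤ |s x - s y| := by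
  rcases le_total x y with hxy | hxy
  · rw [abs_sub_comm x, abs_sub_comm (s x), abs_of_nonneg (sub_nonneg.2 hxy)]
    exact (hs hxy).trans (le_abs_self _)
  · rw [abs_of_nonneg (sub_nonneg.2 hxy)]
    exact (hs hxy).trans (le_abs_self _)

theorem mul_sq_le (hs : IsStronglyIncreasing c s) (x y : ℝ) :
    c * (x - y) ^ 2 ≤ (x - y) * (s x - s y) := by
  rcases le_total x y with hxy | hxy <;> nlinarith [hs hxy]

theorem tendsto_sub_mul {ρ : ℝ → ℝ} {l : Filter ℝ} (hs : IsStronglyIncreasing c s) (hc : 0 < c)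
    (m : ℝ) (hρ : Tendsto ρ l (nhds 0)) (hsρ : Tendsto (fun x => s x * ρ x) l (nhds 0)) :
    Tendsto (fun x => (x - m) * ρ x) l (nhds 0) := by
  have hbound : ∀ x, ‖(x - m) * ρ x‖ ≤ c⁻¹ * ‖(s x - s m) * ρ x‖ := fun x => by
    rw [norm_mul, norm_mul, ← mul_assoc, Real.norm_eq_abs, Real.norm_eq_abs]
    gcongr
    rw [le_inv_mul_iff₀ hc]
    exact hs.mul_abs_sub_le x m
  refine squeeze_zero_norm hbound ?_
  simpa [sub_mul] using ((hsρ.sub (hρ.const_mul (s m))).norm.const_mul c⁻¹)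

end IsStronglyIncreasing

section Score

variable {ρ s : ℝ → ℝ}

theorem integral_mul_sub_mul_eq_integral (hρ : ∀ x, HasDerivAt ρ (-s x * ρ x) x) (m : ℝ)
    (hρi : Integrable ρ) (hi : Integrable fun x => ρ x * ((x - m) * s x))
    (hbot : Tendsto (fun x => (x - m) * ρ x) atBot (nhds 0))
    (htop : Tendsto (fun x => (x - m) * ρ x) atTop (nhds 0)) :
    ∫ x, ρ x * ((x - m) * s x) = ∫ x, ρ x := by
  have hderiv : ∀ x, HasDerivAt (fun y => (y - m) * ρ y) (ρ x - ρ x * ((x - m) * s x)) x :=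
    fun x => (((hasDerivAt_id x).sub_const m).mul (hρ x)).congr_deriv
      (by simp only [id_eq]; ring)
  have h := integral_of_hasDerivAt_of_tendsto hderiv (hρi.sub hi) hbot htop
  rw [integral_sub hρi hi] at h
  linarith

theorem integral_mul_sq_eq_integral_mul_deriv (hρ : ∀ x, HasDerivAt ρ (-s x * ρ x) x)
    {s' : ℝ → ℝ} (hs : ∀ x, HasDerivAt s (s' x) x)
    (hi' : Integrable fun x => ρ x * s' x) (hi2 : Integrable fun x => ρ x * s x ^ 2)
    (hbot : Tendsto (fun x => s x * ρ x) atBot (nhds 0))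
    (htop : Tendsto (fun x => s x * ρ x) atTop (nhds 0)) :
    ∫ x, ρ x * s x ^ 2 = ∫ x, ρ x * s' x := by
  have hderiv : ∀ x, HasDerivAt (fun y => s y * ρ y) (ρ x * s' x - ρ x * s x ^ 2) x :=
    fun x => ((hs x).mul (hρ x)).congr_deriv (by ring)
  have h := integral_of_hasDerivAt_of_tendsto hderiv (hi'.sub hi2) hbot htop
  rw [integral_sub hi' hi2] at h
  linarith

end Score

theorem le_add_mul_sub_add_sq_of_deriv2_le {g g' g'' : ℝ → ℝ} {K : ℝ}
    (hg : ∀ x, HasDerivAt g (g' x) x) (hg' : ∀ x, HasDerivAt g' (g'' x) x)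
    (hK : ∀ x, g'' x ≤ K) (a x : ℝ) :
    g x ≤ g a + g' a * (x - a) + K / 2 * (x - a) ^ 2 := by
  set q : ℝ → ℝ := fun z => g a + g' a * (z - a) + K / 2 * (z - a) ^ 2 - g z
  have hq : ∀ z, HasDerivAt q (g' a + K * (z - a) - g' z) z := fun z => by
    have hlin := (hasDerivAt_id z).sub_const a
    exact ((((hlin.const_mul (g' a)).const_add (g a)).add
      ((hlin.pow 2).const_mul (K / 2))).sub (hg z)).congr_deriv (by simp only [id_eq]; ring)
  have hq'_mono : Monotone fun z => g' a + K * (z - a) - g' z := by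
    refine monotone_of_hasDerivAt_nonneg (f' := fun z => K - g'' z) (fun z => ?_)
      (fun z => sub_nonneg.2 (hK z))
    exact ((((hasDerivAt_id z).sub_const a).const_mul K).const_add (g' a)).sub (hg' z)
      |>.congr_deriv (by simp)
  have hq_convex : ConvexOn ℝ univ q := by
    refine Monotone.convexOn_univ_of_deriv (fun z => (hq z).differentiableAt) ?_
    rwa [show deriv q = _ from funext fun z => (hq z).deriv]
  have hq_min : IsMinOn q univ a := hq_convex.isMinOn_of_rightDeriv_eq_zero (by simp)
    (by rw [(hq a).hasDerivWithinAt.derivWithin (uniqueDiffWithinAt_Ioi a)]; simp)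
  have hqx : q a ≤ q x := hq_min (mem_univ x)
  simp only [q, sub_self] at hqx
  linarith

section Moments

variable {P : Measure ℝ} [IsProbabilityMeasure P]

theorem integral_sub_integral_id (hP : Integrable (fun x => x) P) :
    ∫ x, (x - ∫ y, y ∂P) ∂P = 0 := by
  rw [integral_sub hP (integrable_const _)]
  simp

theorem integral_le_apply_integral_id_add_of_deriv2_le {g g' g'' : ℝ → ℝ} {K : ℝ}
    (hg : ∀ x, HasDerivAt g (g' x) x) (hg' : ∀ x, HasDerivAt g' (g'' x) x)
    (hK : ∀ x, g'' x ≤ K) (hgi : Integrable g P) (hP : Integrable (fun x => x) P)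
    (hP2 : Integrable (fun x => (x - ∫ y, y ∂P) ^ 2) P) :
    ∫ x, g x ∂P ≤ g (∫ y, y ∂P) + K / 2 * ∫ x, (x - ∫ y, y ∂P) ^ 2 ∂P := by
  set m := ∫ y, y ∂P
  have hxm : Integrable (fun x => x - m) P := hP.sub (integrable_const m)
  have hlin : Integrable (fun x => g m + g' m * (x - m)) P :=
    (integrable_const _).add (hxm.const_mul _)
  have hquad : Integrable (fun x => g m + g' m * (x - m) + K / 2 * (x - m) ^ 2) P :=
    hlin.add (hP2.const_mul _)
  have h := integral_mono hgi hquad (le_add_mul_sub_add_sq_of_deriv2_le hg hg' hK m)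
  rwa [integral_add hlin (hP2.const_mul _), integral_add (integrable_const _)
    (hxm.const_mul _), integral_const_mul, integral_const_mul,
    integral_sub_integral_id hP, integral_const, probReal_univ, one_smul, mul_zero,
    add_zero] at h

theorem IsStronglyIncreasing.mul_integral_sub_sq_le {s : ℝ → ℝ} {c : ℝ}
    (hs : IsStronglyIncreasing c s) (hP : Integrable (fun x => x) P)
    (hP2 : Integrable (fun x => (x - ∫ y, y ∂P) ^ 2) P)
    (hPs : Integrable (fun x => (x - ∫ y, y ∂P) * s x) P)
    (hcov : ∫ x, (x - ∫ y, y ∂P) * s x ∂P = 1) :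
    c * ∫ x, (x - ∫ y, y ∂P) ^ 2 ∂P ≤ 1 := by
  set m := ∫ y, y ∂P
  have hxm : Integrable (fun x => x - m) P := hP.sub (integrable_const m)
  have hPs' : Integrable (fun x => (x - m) * s x - s m * (x - m)) P :=
    hPs.sub (hxm.const_mul _)
  have h := integral_mono (hP2.const_mul c) hPs' fun x => by
    linarith [hs.mul_sq_le x m]
  rwa [integral_const_mul, integral_sub hPs (hxm.const_mul _),
    integral_const_mul, integral_sub_integral_id hP, hcov, mul_zero, sub_zero] at h

end Moments

theorem ContDiff.hasDerivAt_iteratedDeriv {f : ℝ → ℝ} {n : WithTop ℕ∞} {m : ℕ}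
    (hf : ContDiff ℝ n f) (hm : (m : WithTop ℕ∞) < n) (x : ℝ) :
    HasDerivAt (iteratedDeriv m f) (iteratedDeriv (m + 1) f x) x := by
  rw [iteratedDeriv_succ]
  exact (hf.differentiable_iteratedDeriv m hm x).hasDerivAt

def hybridScore (φ : ℝ → ℝ) (β μ0 δr : ℝ) (x : ℝ) : ℝ :=
  deriv φ x + β * x - (β * μ0 - δr)

section Hybrid

variable {φ : ℝ → ℝ} {β μ0 δr : ℝ}

theorem continuous_hybridDens (hφ : Continuous φ) : Continuous (hybridDens φ β μ0 δr) := by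
  unfold hybridDens
  fun_prop

theorem hasDerivAt_hybridDens (hφ : Differentiable ℝ φ) (x : ℝ) :
    HasDerivAt (hybridDens φ β μ0 δr)
      (-hybridScore φ β μ0 δr x * hybridDens φ β μ0 δr x) x := by
  have hexponent : HasDerivAt (fun y => -φ y - β / 2 * y ^ 2 + (β * μ0 - δr) * y)
      (-hybridScore φ β μ0 δr x) x := by
    have := (((hφ x).hasDerivAt.neg.sub (((hasDerivAt_id x).pow 2).const_mul (β / 2))).add
      ((hasDerivAt_id x).const_mul (β * μ0 - δr)))
    exact this.congr_deriv (by simp only [id_eq, hybridScore]; ring)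
  exact hexponent.exp.congr_deriv (mul_comm _ _)

theorem hasDerivAt_hybridScore (hφ : ContDiff ℝ 2 φ) (x : ℝ) :
    HasDerivAt (hybridScore φ β μ0 δr) (iteratedDeriv 2 φ x + β) x := by
  have hφ' := hφ.hasDerivAt_iteratedDeriv (m := 1) (by norm_num) x
  rw [iteratedDeriv_one] at hφ'
  exact ((hφ'.add ((hasDerivAt_id x).const_mul β)).sub_const _).congr_deriv (by simp)

theorem isStronglyIncreasing_hybridScore {B : ℝ} (hφ : ContDiff ℝ 2 φ)
    (hB : ∀ x y, iteratedDeriv 2 φ x - iteratedDeriv 2 φ y ≤ B) :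
    IsStronglyIncreasing (β + iteratedDeriv 2 φ μ0 - B) (hybridScore φ β μ0 δr) :=
  .of_le_deriv (fun x => (hasDerivAt_hybridScore hφ x).differentiableAt) fun x => by
    rw [(hasDerivAt_hybridScore hφ x).deriv]
    linarith [hB μ0 x]

theorem integral_hybrid (hφ : Continuous φ) (f : ℝ → ℝ) :
    ∫ x, f x ∂hybrid φ β μ0 δr =
      (∫ x, hybridDens φ β μ0 δr x)⁻¹ * ∫ x, hybridDens φ β μ0 δr x * f x :=
  integral_inv_smul_withDensity_ofReal (continuous_hybridDens hφ).measurable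
    (fun _ => (exp_pos _).le) f

variable [hP : IsProbabilityMeasure (hybrid φ β μ0 δr)]

theorem MeasureTheory.Integrable.hybridDens_mul (hφ : Continuous φ) {f : ℝ → ℝ}
    (hf : Integrable f (hybrid φ β μ0 δr)) :
    Integrable (fun x => hybridDens φ β μ0 δr x * f x) :=
  hf.mul_of_inv_smul_withDensity_ofReal (continuous_hybridDens hφ).measurable
    (fun _ => (exp_pos _).le) (hP := hP)

theorem integral_hybridDens_ne_zero (hφ : Continuous φ) : ∫ x, hybridDens φ β μ0 δr x ≠ 0 := by
  intro h0
  simpa [h0] using integral_hybrid (β := β) (μ0 := μ0) (δr := δr) hφ 1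

theorem integral_hybrid_sub_mul_hybridScore (hφ : Differentiable ℝ φ) (m : ℝ)
    (hi : Integrable (fun x => (x - m) * hybridScore φ β μ0 δr x) (hybrid φ β μ0 δr))
    (hbot : Tendsto (fun x => (x - m) * hybridDens φ β μ0 δr x) atBot (nhds 0))
    (htop : Tendsto (fun x => (x - m) * hybridDens φ β μ0 δr x) atTop (nhds 0)) :
    ∫ x, (x - m) * hybridScore φ β μ0 δr x ∂hybrid φ β μ0 δr = 1 := by
  have hZ := integral_hybridDens_ne_zero (β := β) (μ0 := μ0) (δr := δr) hφ.continuous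
  rw [integral_hybrid hφ.continuous,
    integral_mul_sub_mul_eq_integral (hasDerivAt_hybridDens hφ) m (.of_integral_ne_zero hZ)
      (hi.hybridDens_mul hφ.continuous) hbot htop,
    inv_mul_cancel₀ hZ]

theorem integral_hybridScore_sq (hφ : ContDiff ℝ 2 φ)
    (hi2 : Integrable (fun x => hybridScore φ β μ0 δr x ^ 2) (hybrid φ β μ0 δr))
    (hcurv : Integrable (iteratedDeriv 2 φ) (hybrid φ β μ0 δr))
    (hbot : Tendsto (fun x => hybridScore φ β μ0 δr x * hybridDens φ β μ0 δr x) atBot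
      (nhds 0))
    (htop : Tendsto (fun x => hybridScore φ β μ0 δr x * hybridDens φ β μ0 δr x) atTop
      (nhds 0)) :
    ∫ x, hybridScore φ β μ0 δr x ^ 2 ∂hybrid φ β μ0 δr =
      ∫ x, iteratedDeriv 2 φ x ∂hybrid φ β μ0 δr + β := by
  have hφc : Continuous φ := hφ.continuous
  have hi' : Integrable (fun x => iteratedDeriv 2 φ x + β) (hybrid φ β μ0 δr) :=
    hcurv.add (integrable_const β)
  rw [integral_hybrid hφc, integral_mul_sq_eq_integral_mul_deriv
    (hasDerivAt_hybridDens (hφ.differentiable (by norm_num))) (hasDerivAt_hybridScore hφ)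
    (hi'.hybridDens_mul hφc) (hi2.hybridDens_mul hφc) hbot htop, ← integral_hybrid hφc,
    integral_add hcurv (integrable_const β), integral_const]
  simp

end Hybrid

theorem site_precision_upper_bound_general
    (φ : ℝ → ℝ) (B K4 : ℝ) (hφ : ContDiff ℝ 4 φ)
    (hB : ∀ x y, iteratedDeriv 2 φ x - iteratedDeriv 2 φ y ≤ B)
    (hK4 : ∀ x, |iteratedDeriv 4 φ x| ≤ K4)
    (β μ0 δr : ℝ)
    (hpos : 0 < β + iteratedDeriv 2 φ μ0 - B)
    (hprob : IsProbabilityMeasure (hybrid φ β μ0 δr))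
    (hm1 : Integrable (fun x => x) (hybrid φ β μ0 δr))
    (hvar : 0 < hybridVar φ β μ0 δr)
    (hscore2 : Integrable
      (fun x => (deriv φ x + β * x - (β * μ0 - δr)) ^ 2) (hybrid φ β μ0 δr))
    (hcurv : Integrable (fun x => iteratedDeriv 2 φ x) (hybrid φ β μ0 δr))
    (htop0 : Tendsto (fun x => hybridDens φ β μ0 δr x) atTop (nhds 0))
    (hbot0 : Tendsto (fun x => hybridDens φ β μ0 δr x) atBot (nhds 0))
    (htop1 : Tendsto
      (fun x => (deriv φ x + β * x - (β * μ0 - δr)) * hybridDens φ β μ0 δr x)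
      atTop (nhds 0))
    (hbot1 : Tendsto
      (fun x => (deriv φ x + β * x - (β * μ0 - δr)) * hybridDens φ β μ0 δr x)
      atBot (nhds 0)) :
    (hybridVar φ β μ0 δr)⁻¹ - β ≤
      iteratedDeriv 2 φ (hybridMean φ β μ0 δr) +
        K4 / 2 * (β + iteratedDeriv 2 φ μ0 - B)⁻¹ := by
  have := hprob
  set s := hybridScore φ β μ0 δr
  set m := hybridMean φ β μ0 δr
  set v := hybridVar φ β μ0 δr
  have hφ2 : ContDiff ℝ 2 φ := hφ.of_le (by norm_num)
  have hs : IsStronglyIncreasing (β + iteratedDeriv 2 φ μ0 - B) s :=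
    isStronglyIncreasing_hybridScore hφ2 hB
  -- a non-integrable function has integral `0`
  have hxm2 : Integrable (fun x => (x - m) ^ 2) (hybrid φ β μ0 δr) :=
    .of_integral_ne_zero hvar.ne'
  have hxs : Integrable (fun x => (x - m) * s x) (hybrid φ β μ0 δr) :=
    .mul_of_integrable_sq (by fun_prop) (continuous_iff_continuousAt.2
      fun x => (hasDerivAt_hybridScore hφ2 x).continuousAt).aestronglyMeasurable hxm2 hscore2
  have hcov : ∫ x, (x - m) * s x ∂hybrid φ β μ0 δr = 1 :=
    integral_hybrid_sub_mul_hybridScore (hφ.differentiable (by norm_num)) m hxs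
      (hs.tendsto_sub_mul hpos m hbot0 hbot1) (hs.tendsto_sub_mul hpos m htop0 htop1)
  have hfisher : ∫ x, s x ^ 2 ∂hybrid φ β μ0 δr = ∫ x, iteratedDeriv 2 φ x ∂hybrid φ β μ0 δr + β :=
    integral_hybridScore_sq hφ2 hscore2 hcurv hbot1 htop1
  have hcramerRao : v⁻¹ ≤ ∫ x, s x ^ 2 ∂hybrid φ β μ0 δr :=
    inv_integral_sq_le_integral_sq hxm2 hscore2 hxs hcov hvar
  have hv_le : v ≤ (β + iteratedDeriv 2 φ μ0 - B)⁻¹ := by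
    rw [le_inv_comm₀ hvar hpos, inv_eq_one_div, le_div_iff₀ hvar]
    exact hs.mul_integral_sub_sq_le hm1 hxm2 hxs hcov
  have hcurv_le :
      ∫ x, iteratedDeriv 2 φ x ∂hybrid φ β μ0 δr ≤ iteratedDeriv 2 φ m + K4 / 2 * v :=
    integral_le_apply_integral_id_add_of_deriv2_le
      (hφ.hasDerivAt_iteratedDeriv (by norm_num)) (hφ.hasDerivAt_iteratedDeriv (by norm_num))
      (fun x => (abs_le.1 (hK4 x)).2) hcurv hm1 hxm2
  have hK4_nonneg : 0 ≤ K4 := (abs_nonneg _).trans (hK4 0)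
  calc v⁻¹ - β ≤ ∫ x, iteratedDeriv 2 φ x ∂hybrid φ β μ0 δr := by linarith
    _ ≤ iteratedDeriv 2 φ m + K4 / 2 * v := hcurv_le
    _ ≤ _ := by gcongr

/-- Cramér–Rao upper bound on the site precision.  If `φ` is C⁴ with
`sup φ'' − inf φ'' ≤ B`, `|φ''''| ≤ K4`, `β + φ''(μ0) − B > 0`, and the hybrid is a
well-defined probability measure with finite variance `v_h > 0` with the regularity
needed for integration by parts (the unnormalized density and its score-weighted
version vanish at `±∞`, with the relevant integrands `h`-integrable), then
`β_site := v_h⁻¹ − β ≤ φ''(μ_h) + (K4/2)·(β + φ''(μ0) − B)⁻¹`. -/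
theorem site_precision_upper_bound
    (φ : ℝ → ℝ) (B K4 : ℝ) (hφ : ContDiff ℝ 4 φ)
    (hB : ∀ x y, iteratedDeriv 2 φ x - iteratedDeriv 2 φ y ≤ B)
    (hK4 : ∀ x, |iteratedDeriv 4 φ x| ≤ K4)
    (β μ0 δr : ℝ) (hβ : 0 < β)
    (hpos : 0 < β + iteratedDeriv 2 φ μ0 - B)
    (hprob : IsProbabilityMeasure (hybrid φ β μ0 δr))
    (hm1 : Integrable (fun x => x) (hybrid φ β μ0 δr))
    (hm2 : Integrable (fun x => x ^ 2) (hybrid φ β μ0 δr))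
    (hvar : 0 < hybridVar φ β μ0 δr)
    (hscore2 : Integrable
      (fun x => (deriv φ x + β * x - (β * μ0 - δr)) ^ 2) (hybrid φ β μ0 δr))
    (hcurv : Integrable (fun x => iteratedDeriv 2 φ x) (hybrid φ β μ0 δr))
    (htop0 : Tendsto (fun x => hybridDens φ β μ0 δr x) atTop (nhds 0))
    (hbot0 : Tendsto (fun x => hybridDens φ β μ0 δr x) atBot (nhds 0))
    (htop1 : Tendsto
      (fun x => (deriv φ x + β * x - (β * μ0 - δr)) * hybridDens φ β μ0 δr x)
      atTop (nhds 0))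
    (hbot1 : Tendsto
      (fun x => (deriv φ x + β * x - (β * μ0 - δr)) * hybridDens φ β μ0 δr x)
      atBot (nhds 0)) :
    (hybridVar φ β μ0 δr)⁻¹ - β ≤
      iteratedDeriv 2 φ (hybridMean φ β μ0 δr) +
        K4 / 2 * (β + iteratedDeriv 2 φ μ0 - B)⁻¹ :=
  site_precision_upper_bound_general φ B K4 hφ hB hK4 β μ0 δr hpos hprob hm1 hvar hscore2 hcurv
    htop0 hbot0 htop1 hbot1
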